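/- Let β > 0 and define y : (0,∞) → ℝ by y(x) := √x · K(1/(β+2), (2/(β+2))·x^((β+2)/2)), where K(ν,z) := ∫₀^∞ exp(−z·cosh t)·cosh(ν·t) dt. Then −2·y(x)·y′(x) tends to π·(β+2)/(2·sin(π/(β+2))) as x → 0 from the right. -/

import Mathlib

open Set Filter Real

/-- Modified Bessel function of the second kind (integral representation):
`K(ν, z) = ∫₀^∞ exp(−z cosh t) cosh(ν t) dt`. -/
noncomputable def besselK (ν z : ℝ) : ℝ :=
  ∫ t in Set.Ioi (0 : ℝ), Real.exp (-z * Real.cosh t) * Real.cosh (ν * t)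

/-- The decaying solution `y₊(x) = √x · K(1/(β+2), (2/(β+2)) x^((β+2)/2))` of the
anharmonic equation `−y″ + x^β y = 0` on `(0,∞)`. -/
noncomputable def yPlus (β x : ℝ) : ℝ :=
  Real.sqrt x * besselK (1 / (β + 2)) (2 / (β + 2) * x ^ ((β + 2) / 2))

/-!
Write `ν = 1/(β+2)`, `a = (β+2)/2` and `z = (2/(β+2)) x^a`. Differentiating under the integral
sign gives `K_ν' = -(K_{ν+1} + K_{ν-1})/2`, and integrating `(e^{-z cosh t} sinh νt)'` over
`(0,∞)` gives the recurrence `z (K_{ν+1} - K_{ν-1}) = 2ν K_ν`. Since `K_{ν-1} = K_{1-ν}`, these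
turn `-2 y y'` into `(β+2) · z K_ν(z) K_{1-ν}(z)`.

The substitution `s = (z/2) eᵗ` on the whole line gives
`z^ν K_ν(z) = 2^{ν-1} ∫₀^∞ e^{-s - z²/(4s)} s^{ν-1} ds`, which tends to `2^{ν-1} Γ(ν)` as
`z → 0⁺` by dominated convergence. Hence `z K_ν(z) K_{1-ν}(z) → Γ(ν) Γ(1-ν) / 2`, which is
`π / (2 sin πν)` by the reflection formula.
-/

open MeasureTheory Topology

lemma exp_neg_mul_cosh_mul_exp_le_exp_neg {z μ t : ℝ} (hz : 0 < z)
    (ht : 4 * (|μ| + 1) / z ≤ t) :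
    exp (-z * cosh t) * exp (μ * t) ≤ exp (-t) := by
  have hμt : 4 * (|μ| + 1) ≤ z * t := by rwa [div_le_iff₀' hz] at ht
  have ht0 : 0 ≤ t := by nlinarith [abs_nonneg μ]
  have hcosh : (1 + t + t ^ 2 / 2) / 2 ≤ cosh t := by
    rw [cosh_eq]; linarith [quadratic_le_exp_of_nonneg ht0, (exp_pos (-t)).le]
  rw [← exp_add, exp_le_exp]
  nlinarith [mul_le_mul_of_nonneg_left hcosh hz.le, mul_le_mul_of_nonneg_right hμt ht0,
    le_abs_self μ]

lemma integrableOn_exp_neg_mul_cosh_mul_exp {z : ℝ} (hz : 0 < z) (μ : ℝ) :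
    IntegrableOn (fun t => exp (-z * cosh t) * exp (μ * t)) (Ioi 0) := by
  refine integrable_of_isBigO_exp_neg one_pos (by fun_prop) (Asymptotics.IsBigO.of_bound 1 ?_)
  filter_upwards [eventually_ge_atTop (4 * (|μ| + 1) / z)] with t ht
  simpa [abs_of_pos (exp_pos _)] using exp_neg_mul_cosh_mul_exp_le_exp_neg hz ht

lemma integrableOn_exp_neg_mul_cosh_mul_cosh {z : ℝ} (hz : 0 < z) (ν : ℝ) :
    IntegrableOn (fun t => exp (-z * cosh t) * cosh (ν * t)) (Ioi 0) :=
  IntegrableOn.congr_fun (((integrableOn_exp_neg_mul_cosh_mul_exp hz ν).add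
    (integrableOn_exp_neg_mul_cosh_mul_exp hz (-ν))).div_const 2)
    (fun t _ => by simp only [Pi.add_apply, cosh_eq, neg_mul]; ring) measurableSet_Ioi

lemma besselK_neg_order (ν z : ℝ) : besselK (-ν) z = besselK ν z := by
  simp only [besselK, neg_mul, cosh_neg]

lemma cosh_mul_cosh_eq (ν t : ℝ) :
    cosh t * cosh (ν * t) = (cosh ((ν + 1) * t) + cosh ((ν - 1) * t)) / 2 := by
  rw [add_one_mul, sub_one_mul, cosh_add, cosh_sub]; ring

lemma sinh_mul_sinh_eq (ν t : ℝ) :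
    sinh t * sinh (ν * t) = (cosh ((ν + 1) * t) - cosh ((ν - 1) * t)) / 2 := by
  rw [add_one_mul, sub_one_mul, cosh_add, cosh_sub]; ring

lemma besselK_recurrence {z : ℝ} (hz : 0 < z) (ν : ℝ) :
    z * (besselK (ν + 1) z - besselK (ν - 1) z) = 2 * ν * besselK ν z := by
  have hK := integrableOn_exp_neg_mul_cosh_mul_cosh hz
  have hderiv : ∀ t ∈ Ici (0 : ℝ), HasDerivAt (fun t => exp (-z * cosh t) * sinh (ν * t))
      (ν * (exp (-z * cosh t) * cosh (ν * t)) - z / 2 *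
        (exp (-z * cosh t) * cosh ((ν + 1) * t) - exp (-z * cosh t) * cosh ((ν - 1) * t))) t := by
    intro t _
    refine (((hasDerivAt_cosh t).const_mul (-z)).exp.mul
      ((hasDerivAt_sinh (ν * t)).comp t ((hasDerivAt_id t).const_mul ν))).congr_deriv ?_
    simp only [Function.comp_apply]
    linear_combination (-z * exp (-z * cosh t)) * sinh_mul_sinh_eq ν t
  have hdiff : IntegrableOn (fun t => z / 2 *
      (exp (-z * cosh t) * cosh ((ν + 1) * t) - exp (-z * cosh t) * cosh ((ν - 1) * t)))
      (Ioi 0) :=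
    ((hK _).sub (hK _)).const_mul _
  have hderiv_int := ((hK ν).const_mul ν).sub hdiff
  have hf_int : IntegrableOn (fun t => exp (-z * cosh t) * sinh (ν * t)) (Ioi 0) :=
    IntegrableOn.congr_fun (((integrableOn_exp_neg_mul_cosh_mul_exp hz ν).sub
      (integrableOn_exp_neg_mul_cosh_mul_exp hz (-ν))).div_const 2)
      (fun t _ => by simp only [Pi.sub_apply, sinh_eq, neg_mul]; ring) measurableSet_Ioi
  have hftc := integral_Ioi_of_hasDerivAt_of_tendsto' hderiv hderiv_int
    (tendsto_zero_of_hasDerivAt_of_integrableOn_Ioi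
      (fun t ht => hderiv t (Ioi_subset_Ici_self ht)) hderiv_int hf_int)
  rw [integral_sub ((hK ν).const_mul ν) hdiff,
    integral_const_mul, integral_const_mul, integral_sub (hK (ν + 1)) (hK (ν - 1))] at hftc
  simp only [mul_zero, sinh_zero, sub_zero] at hftc
  unfold besselK
  linarith

lemma hasDerivAt_besselK {z : ℝ} (hz : 0 < z) (ν : ℝ) :
    HasDerivAt (besselK ν) (-(besselK (ν + 1) z + besselK (ν - 1) z) / 2) z := by
  have hK := integrableOn_exp_neg_mul_cosh_mul_cosh (half_pos hz)
  -- the derivative in `w` is dominated uniformly on `w > z/2`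
  have hparam := hasDerivAt_integral_of_dominated_loc_of_deriv_le (μ := volume.restrict (Ioi 0))
    (F := fun w t => exp (-w * cosh t) * cosh (ν * t))
    (F' := fun w t => -(exp (-w * cosh t) * cosh ((ν + 1) * t) +
      exp (-w * cosh t) * cosh ((ν - 1) * t)) / 2)
    (bound := fun t => (exp (-(z / 2) * cosh t) * cosh ((ν + 1) * t) +
      exp (-(z / 2) * cosh t) * cosh ((ν - 1) * t)) / 2)
    (Ioi_mem_nhds (half_lt_self hz))
    (.of_forall fun w => (by fun_prop : Continuous _).aestronglyMeasurable)
    (integrableOn_exp_neg_mul_cosh_mul_cosh hz ν)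
    (by fun_prop : Continuous _).aestronglyMeasurable ?_ (((hK _).add (hK _)).div_const 2) ?_
  · refine hparam.2.congr_deriv ?_
    rw [integral_div, integral_neg, integral_add (integrableOn_exp_neg_mul_cosh_mul_cosh hz _)
      (integrableOn_exp_neg_mul_cosh_mul_cosh hz _)]
    rfl
  · refine .of_forall fun t w (hw : z / 2 < w) => ?_
    rw [norm_div, norm_neg, norm_of_nonneg (by positivity), Real.norm_two]
    gcongr
  · refine .of_forall fun t w _ => ?_
    refine (((hasDerivAt_id w).neg.mul_const (cosh t)).exp.mul_const
      (cosh (ν * t))).congr_deriv ?_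
    simp only [Pi.neg_apply, id]
    linear_combination (-exp (-w * cosh t)) * cosh_mul_cosh_eq ν t

lemma norm_exp_neg_sub_div_mul_rpow_le {s : ℝ} (hs : 0 < s) (ν z : ℝ) :
    ‖exp (-s - z ^ 2 / (4 * s)) * s ^ (ν - 1)‖ ≤ exp (-s) * s ^ (ν - 1) := by
  rw [norm_of_nonneg (by positivity)]
  gcongr
  linarith [show 0 ≤ z ^ 2 / (4 * s) by positivity]

lemma integrableOn_exp_neg_sub_div_mul_rpow {ν : ℝ} (hν : 0 < ν) (z : ℝ) :
    IntegrableOn (fun s => exp (-s - z ^ 2 / (4 * s)) * s ^ (ν - 1)) (Ioi 0) :=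
  (GammaIntegral_convergent hν).mono' (by fun_prop : Measurable _).aestronglyMeasurable <|
    (ae_restrict_mem measurableSet_Ioi).mono fun _ hs => norm_exp_neg_sub_div_mul_rpow_le hs ν z

lemma image_univ_const_mul_exp {c : ℝ} (hc : 0 < c) : (fun t => c * exp t) '' univ = Ioi 0 := by
  rw [image_univ, range_comp' (c * ·) exp, range_exp, image_const_mul_Ioi_zero hc]

-- the Jacobian identity of the substitution `s = (z/2) eᵗ`, a bijection from `ℝ` onto `(0,∞)`
lemma abs_half_mul_exp_smul_eq {z : ℝ} (hz : 0 < z) (ν t : ℝ) :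
    |z / 2 * exp t| • (exp (-(z / 2 * exp t) - z ^ 2 / (4 * (z / 2 * exp t))) *
      (z / 2 * exp t) ^ (ν - 1)) = (z / 2) ^ ν * (exp (-z * cosh t) * exp (ν * t)) := by
  have hz2 : 0 < z / 2 := by positivity
  have hcosh : -(z / 2 * exp t) - z ^ 2 / (4 * (z / 2 * exp t)) = -z * cosh t := by
    rw [cosh_eq, exp_neg]; field_simp; ring
  have hexp : exp t * exp t ^ (ν - 1) = exp (ν * t) := by
    rw [← exp_mul, ← exp_add]; ring_nf
  rw [smul_eq_mul, abs_of_pos (by positivity), mul_rpow hz2.le (exp_pos t).le, hcosh,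
    rpow_sub_one hz2.ne', ← hexp]
  field_simp

lemma integrable_exp_neg_mul_cosh_mul_exp {z ν : ℝ} (hz : 0 < z) (hν : 0 < ν) :
    Integrable (fun t => exp (-z * cosh t) * exp (ν * t)) := by
  have hz2 : 0 < z / 2 := by positivity
  have h := (integrableOn_image_iff_integrableOn_abs_deriv_smul MeasurableSet.univ
    (fun t _ => ((hasDerivAt_exp t).const_mul (z / 2)).hasDerivWithinAt)
    ((mul_right_injective₀ hz2.ne').comp exp_injective).injOn
    (fun s => exp (-s - z ^ 2 / (4 * s)) * s ^ (ν - 1))).mp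
  rw [image_univ_const_mul_exp hz2] at h
  simp only [abs_half_mul_exp_smul_eq hz, integrableOn_univ] at h
  exact (integrable_const_mul_iff (rpow_pos_of_pos hz2 ν).ne'.isUnit _).mp
    (h (integrableOn_exp_neg_sub_div_mul_rpow hν z))

lemma rpow_mul_integral_exp_neg_mul_cosh_mul_exp {z : ℝ} (hz : 0 < z) (ν : ℝ) :
    (z / 2) ^ ν * ∫ t, exp (-z * cosh t) * exp (ν * t) =
      ∫ s in Ioi 0, exp (-s - z ^ 2 / (4 * s)) * s ^ (ν - 1) := by
  have hz2 : 0 < z / 2 := by positivity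
  rw [← image_univ_const_mul_exp hz2,
    integral_image_eq_integral_abs_deriv_smul MeasurableSet.univ
      (fun t _ => ((hasDerivAt_exp t).const_mul (z / 2)).hasDerivWithinAt)
      ((mul_right_injective₀ hz2.ne').comp exp_injective).injOn, setIntegral_univ,
    ← integral_const_mul]
  simp only [abs_half_mul_exp_smul_eq hz]

lemma besselK_eq_integral_div_two {z ν : ℝ} (hz : 0 < z) (hν : 0 < ν) :
    besselK ν z = (∫ t, exp (-z * cosh t) * exp (ν * t)) / 2 := by
  have hI := integrable_exp_neg_mul_cosh_mul_exp hz hν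
  have hneg := integral_comp_neg_Ioi 0 fun t => exp (-z * cosh t) * exp (ν * t)
  rw [neg_zero] at hneg
  rw [← intervalIntegral.integral_Iic_add_Ioi hI.integrableOn hI.integrableOn, ← hneg,
    ← integral_add hI.comp_neg.integrableOn hI.integrableOn, ← integral_div]
  refine setIntegral_congr_fun measurableSet_Ioi fun t _ => ?_
  simp only [cosh_neg, cosh_eq (ν * t)]
  ring_nf

lemma rpow_mul_besselK_eq {z ν : ℝ} (hz : 0 < z) (hν : 0 < ν) :
    z ^ ν * besselK ν z =
      2 ^ (ν - 1) * ∫ s in Ioi 0, exp (-s - z ^ 2 / (4 * s)) * s ^ (ν - 1) := by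
  rw [besselK_eq_integral_div_two hz hν,
    ← rpow_mul_integral_exp_neg_mul_cosh_mul_exp hz, div_rpow hz.le zero_le_two,
    rpow_sub_one two_ne_zero]
  field_simp

lemma tendsto_integral_exp_neg_sub_div_mul_rpow {ν : ℝ} (hν : 0 < ν) :
    Tendsto (fun z => ∫ s in Ioi 0, exp (-s - z ^ 2 / (4 * s)) * s ^ (ν - 1)) (𝓝 0)
      (𝓝 (Gamma ν)) := by
  rw [Gamma_eq_integral hν]
  refine tendsto_integral_filter_of_dominated_convergence _
    (.of_forall fun z => (by fun_prop : Measurable _).aestronglyMeasurable)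
    (.of_forall fun z => (ae_restrict_mem measurableSet_Ioi).mono fun _ hs =>
      norm_exp_neg_sub_div_mul_rpow_le hs ν z)
    (GammaIntegral_convergent hν) (.of_forall fun s => ?_)
  simpa using ((by fun_prop : Continuous fun z : ℝ =>
    exp (-s - z ^ 2 / (4 * s)) * s ^ (ν - 1)).tendsto 0)

lemma tendsto_rpow_mul_besselK {ν : ℝ} (hν : 0 < ν) :
    Tendsto (fun z => z ^ ν * besselK ν z) (𝓝[>] 0) (𝓝 (2 ^ (ν - 1) * Gamma ν)) :=
  (((tendsto_integral_exp_neg_sub_div_mul_rpow hν).mono_left nhdsWithin_le_nhds).const_mul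
    _).congr'
    (eventually_mem_nhdsWithin.mono fun _ hz => (rpow_mul_besselK_eq hz hν).symm)

lemma tendsto_mul_besselK_mul_besselK_one_sub {ν : ℝ} (hν : 0 < ν) (hν1 : ν < 1) :
    Tendsto (fun z => z * (besselK ν z * besselK (1 - ν) z)) (𝓝[>] 0)
      (𝓝 (π / (2 * sin (π * ν)))) := by
  have h := (tendsto_rpow_mul_besselK hν).mul (tendsto_rpow_mul_besselK (sub_pos.2 hν1))
  have hlim : 2 ^ (ν - 1) * Gamma ν * (2 ^ (1 - ν - 1) * Gamma (1 - ν)) =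
      π / (2 * sin (π * ν)) := by
    rw [mul_mul_mul_comm, ← rpow_add two_pos, Gamma_mul_Gamma_one_sub,
      show ν - 1 + (1 - ν - 1) = -1 by ring, rpow_neg_one]
    ring
  rw [hlim] at h
  refine h.congr' (eventually_mem_nhdsWithin.mono fun z (hz : 0 < z) => ?_)
  rw [mul_mul_mul_comm, ← rpow_add hz, add_sub_cancel, rpow_one]

lemma neg_two_mul_yPlus_mul_deriv_yPlus {β x : ℝ} (hβ : -2 < β) (hx : 0 < x) :
    -2 * yPlus β x * deriv (yPlus β) x =
      (β + 2) * (2 / (β + 2) * x ^ ((β + 2) / 2) *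
        (besselK (1 / (β + 2)) (2 / (β + 2) * x ^ ((β + 2) / 2)) *
          besselK (1 - 1 / (β + 2)) (2 / (β + 2) * x ^ ((β + 2) / 2)))) := by
  have hb : 0 < β + 2 := by linarith
  set ν := 1 / (β + 2)
  set a := (β + 2) / 2
  set z := 2 / (β + 2) * x ^ a
  have hz : 0 < z := by positivity
  have hK := (hasDerivAt_besselK hz ν).comp x
    ((hasDerivAt_rpow_const (p := a) (.inl hx.ne')).const_mul (2 / (β + 2)))
  have hy : HasDerivAt (yPlus β) (1 / (2 * √x) * besselK ν z +
      √x * (-(besselK (ν + 1) z + besselK (ν - 1) z) / 2 *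
        (2 / (β + 2) * (a * x ^ (a - 1))))) x :=
    (hasDerivAt_sqrt hx.ne').mul hK
  have hrec := besselK_recurrence hz ν
  rw [show ν - 1 = -(1 - ν) by ring, besselK_neg_order] at hy hrec
  have hinv : √x * (1 / (2 * √x)) = 1 / 2 := by field_simp [(sqrt_pos.2 hx).ne']
  have hxa : x * x ^ (a - 1) = x ^ a := by rw [mul_comm, rpow_sub_one hx.ne']; field_simp
  have haν : 2 * a * ν = 1 := by simp only [a, ν]; field_simp
  rw [hy.deriv, show yPlus β x = √x * besselK ν z from rfl]
  -- `-2 y y' = -K_ν² + a z K_ν (K_{ν+1} + K_{1-ν})`, and `hrec` trades `z K_{ν+1}`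
  -- for `z K_{1-ν} + 2ν K_ν`
  linear_combination (-2 * besselK ν z ^ 2) * hinv
    + (besselK ν z * (besselK (ν + 1) z + besselK (1 - ν) z) *
        (2 / (β + 2) * (a * x ^ (a - 1)))) * mul_self_sqrt hx.le
    + (besselK ν z * (besselK (ν + 1) z + besselK (1 - ν) z) * (2 / (β + 2) * a)) * hxa
    + (a * besselK ν z) * hrec + besselK ν z ^ 2 * haν

lemma tendsto_const_mul_rpow_nhdsGT_zero {c a : ℝ} (hc : 0 < c) (ha : 0 < a) :
    Tendsto (fun x => c * x ^ a) (𝓝[>] 0) (𝓝[>] 0) := by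
  refine tendsto_nhdsWithin_iff.2 ⟨?_, eventually_mem_nhdsWithin.mono fun x (hx : 0 < x) => ?_⟩
  · have := ((continuousAt_rpow_const 0 a (.inr ha.le)).const_mul c).tendsto
    rw [zero_rpow ha.ne', mul_zero] at this
    exact this.mono_left nhdsWithin_le_nhds
  · exact mul_pos hc (rpow_pos_of_pos hx a)

/-- the Wronskian value at the origin:
`−2 y(x) y′(x) → π (β+2) / (2 sin(π/(β+2)))` as `x → 0⁺`. -/
theorem stmt9 (β : ℝ) (hβ : 0 < β) :
    Tendsto (fun x : ℝ => -2 * yPlus β x * deriv (yPlus β) x)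
      (nhdsWithin 0 (Ioi (0 : ℝ)))
      (nhds (π * (β + 2) / (2 * Real.sin (π / (β + 2))))) := by
  have hb : 0 < β + 2 := by linarith
  have hν : 1 / (β + 2) < 1 := by rw [div_lt_one hb]; linarith
  have hz := tendsto_const_mul_rpow_nhdsGT_zero (c := 2 / (β + 2)) (a := (β + 2) / 2)
    (by positivity) (by positivity)
  have h := ((tendsto_mul_besselK_mul_besselK_one_sub (by positivity) hν).comp hz).const_mul
    (β + 2)
  rw [mul_one_div, mul_div_left_comm, ← mul_div_assoc] at h
  exact h.congr' (eventually_mem_nhdsWithin.mono fun x hx =>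
    (neg_two_mul_yPlus_mul_deriv_yPlus (by linarith) hx).symm)
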